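/- arXiv:1407.7785 — 4 statements merged into one kernel-verified Lean document; each statement's English description precedes it below -/
import Mathlib

section
/- Let ℓ ≥ 1, let r_1, …, r_ℓ be positive integers with r = r_1 + ⋯ + r_ℓ, and let b_1, …, b_ℓ be rational numbers. Then ∑_{i=2}^{ℓ} (r_i / (2 (∑_{j=1}^{i} r_j)(∑_{k=1}^{i−1} r_k))) · (∑_{j=1}^{i−1} r_j (b_j − b_i))² = ∑_{i=1}^{ℓ} (r_i (r − r_i)/(2r)) b_i² − (1/r) ∑_{1 ≤ i < j ≤ ℓ} r_i r_j b_i b_j. -/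
open Finset

theorem quadratic_form_partial_sum_identity (ℓ : ℕ) (hℓ : 1 ≤ ℓ) (r : ℕ → ℤ)
    (hr : ∀ i ∈ Finset.Icc 1 ℓ, 0 < r i) (b : ℕ → ℚ)
    (R : ℤ) (hR : R = ∑ i ∈ Finset.Icc 1 ℓ, r i) :
    ∑ i ∈ Finset.Icc 2 ℓ,
        ((r i : ℚ) / (2 * (∑ j ∈ Finset.Icc 1 i, (r j : ℚ)) * (∑ k ∈ Finset.Icc 1 (i - 1), (r k : ℚ))))
          * (∑ j ∈ Finset.Icc 1 (i - 1), (r j : ℚ) * (b j - b i)) ^ 2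
      = ∑ i ∈ Finset.Icc 1 ℓ, ((r i : ℚ) * ((R : ℚ) - (r i : ℚ)) / (2 * (R : ℚ))) * (b i) ^ 2
        - (1 / (R : ℚ)) * ∑ i ∈ Finset.Icc 1 ℓ, ∑ j ∈ Finset.Icc (i + 1) ℓ,
            (r i : ℚ) * (r j : ℚ) * b i * b j := by
  have hrQ : ∀ i ∈ Finset.Icc 1 ℓ, (0:ℚ) < (r i : ℚ) := by
    intro i hi; exact_mod_cast hr i hi
  have hS : ∀ m, 1 ≤ m → m ≤ ℓ → 0 < ∑ i ∈ Finset.Icc 1 m, (r i : ℚ) := by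
    intro m h1 h2
    apply Finset.sum_pos
    · intro i hi
      rw [Finset.mem_Icc] at hi
      exact hrQ i (Finset.mem_Icc.mpr ⟨hi.1, le_trans hi.2 h2⟩)
    · exact ⟨1, Finset.mem_Icc.mpr ⟨le_refl 1, h1⟩⟩
  have main : ∀ m, 1 ≤ m → m ≤ ℓ →
      ∑ i ∈ Finset.Icc 2 m,
        ((r i : ℚ) / (2 * (∑ j ∈ Finset.Icc 1 i, (r j : ℚ)) * (∑ k ∈ Finset.Icc 1 (i - 1), (r k : ℚ))))
          * (∑ j ∈ Finset.Icc 1 (i - 1), (r j : ℚ) * (b j - b i)) ^ 2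
      = (∑ i ∈ Finset.Icc 1 m, (r i : ℚ) * b i ^ 2) / 2
        - (∑ i ∈ Finset.Icc 1 m, (r i : ℚ) * b i) ^ 2 / (2 * ∑ i ∈ Finset.Icc 1 m, (r i : ℚ)) := by
    intro m
    induction m with
    | zero => omega
    | succ n ih =>
      intro _ h2
      rcases Nat.eq_zero_or_pos n with hn | hn
      · subst hn
        have hr1 : (0:ℚ) < (r 1 : ℚ) := hrQ 1 (Finset.mem_Icc.mpr ⟨le_refl 1, hℓ⟩)
        simp only [Finset.Icc_self, Finset.sum_singleton, show Finset.Icc 2 1 = ∅ by rfl,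
          Finset.sum_empty]
        field_simp
        ring
      · have hn' : 1 ≤ n := hn
        have hnl : n ≤ ℓ := by omega
        have hsn : 0 < ∑ i ∈ Finset.Icc 1 n, (r i : ℚ) := hS n hn' hnl
        have hsn1 : 0 < ∑ i ∈ Finset.Icc 1 (n+1), (r i : ℚ) := hS (n+1) (by omega) h2
        have e1 : ∀ f : ℕ → ℚ, ∑ i ∈ Finset.Icc 1 (n+1), f i
            = (∑ i ∈ Finset.Icc 1 n, f i) + f (n+1) := by
          intro f; exact Finset.sum_Icc_succ_top (by omega) f
        have e2 : ∀ f : ℕ → ℚ, ∑ i ∈ Finset.Icc 2 (n+1), f i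
            = (∑ i ∈ Finset.Icc 2 n, f i) + f (n+1) := by
          intro f; exact Finset.sum_Icc_succ_top (by omega) f
        rw [e2, ih hn' hnl, e1 (fun i => (r i : ℚ) * b i ^ 2), e1 (fun i => (r i : ℚ) * b i)]
        simp only [Nat.add_sub_cancel]
        have hdiff : ∑ j ∈ Finset.Icc 1 n, (r j : ℚ) * (b j - b (n+1))
            = (∑ j ∈ Finset.Icc 1 n, (r j : ℚ) * b j)
              - (∑ j ∈ Finset.Icc 1 n, (r j : ℚ)) * b (n+1) := by
          rw [Finset.sum_mul]
          rw [← Finset.sum_sub_distrib]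
          exact Finset.sum_congr rfl fun j _ => by ring
        rw [hdiff, e1 (fun i => (r i : ℚ))]
        set s := ∑ i ∈ Finset.Icc 1 n, (r i : ℚ) with hs
        set T := ∑ i ∈ Finset.Icc 1 n, (r i : ℚ) * b i with hT
        have hsn1' : 0 < s + (r (n+1) : ℚ) := by
          rw [e1 (fun i => (r i : ℚ))] at hsn1; exact hsn1
        have h1 : s ≠ 0 := ne_of_gt hsn
        have h2' : s + (r (n+1) : ℚ) ≠ 0 := ne_of_gt hsn1'
        field_simp
        ring
  have sq_exp : ∀ m, (∑ i ∈ Finset.Icc 1 m, (r i : ℚ) * b i) ^ 2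
      = (∑ i ∈ Finset.Icc 1 m, ((r i : ℚ) * b i) ^ 2)
        + 2 * ∑ i ∈ Finset.Icc 1 m, ∑ j ∈ Finset.Icc (i+1) m,
            (r i : ℚ) * (r j : ℚ) * b i * b j := by
    intro m
    induction m with
    | zero => simp
    | succ n ih =>
      rw [Finset.sum_Icc_succ_top (by omega : 1 ≤ n + 1) (fun i => (r i : ℚ) * b i),
          Finset.sum_Icc_succ_top (by omega : 1 ≤ n + 1) (fun i => ((r i : ℚ) * b i) ^ 2),
          Finset.sum_Icc_succ_top (by omega : 1 ≤ n + 1)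
            (fun i => ∑ j ∈ Finset.Icc (i+1) (n+1), (r i : ℚ) * (r j : ℚ) * b i * b j)]
      have hinner : ∑ i ∈ Finset.Icc 1 n, ∑ j ∈ Finset.Icc (i+1) (n+1),
          (r i : ℚ) * (r j : ℚ) * b i * b j
          = (∑ i ∈ Finset.Icc 1 n, ∑ j ∈ Finset.Icc (i+1) n,
              (r i : ℚ) * (r j : ℚ) * b i * b j)
            + (∑ i ∈ Finset.Icc 1 n, (r i : ℚ) * b i) * ((r (n+1) : ℚ) * b (n+1)) := by
        rw [Finset.sum_mul, ← Finset.sum_add_distrib]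
        refine Finset.sum_congr rfl fun i hi => ?_
        rw [Finset.mem_Icc] at hi
        rw [Finset.sum_Icc_succ_top (by omega : i + 1 ≤ n + 1)]
        ring
      rw [hinner]
      have hempty : Finset.Icc (n+1+1) (n+1) = ∅ := by
        apply Finset.Icc_eq_empty; omega
      rw [hempty, Finset.sum_empty]
      nlinarith [ih]
  have hRpos : (0:ℚ) < (R : ℚ) := by
    have : (R : ℚ) = ∑ i ∈ Finset.Icc 1 ℓ, (r i : ℚ) := by
      rw [hR]; push_cast [Int.cast_sum]; rfl
    rw [this]; exact hS ℓ hℓ le_rfl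
  have hR0 : (R : ℚ) ≠ 0 := ne_of_gt hRpos
  have hRsum : (R : ℚ) = ∑ i ∈ Finset.Icc 1 ℓ, (r i : ℚ) := by
    rw [hR]; push_cast [Int.cast_sum]; rfl
  have key : ∑ i ∈ Finset.Icc 1 ℓ, ((r i : ℚ) * ((R : ℚ) - (r i : ℚ)) / (2 * (R : ℚ))) * (b i) ^ 2
      = ∑ i ∈ Finset.Icc 1 ℓ, ((r i : ℚ) * b i ^ 2 / 2 - ((r i : ℚ) * b i) ^ 2 / (2 * (R : ℚ))) := by
    refine Finset.sum_congr rfl fun i _ => ?_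
    field_simp
  rw [main ℓ hℓ le_rfl, key, Finset.sum_sub_distrib, ← Finset.sum_div, ← Finset.sum_div,
    ← hRsum, sq_exp ℓ]
  field_simp
  ring
end

section
/- Let V be a vector space over ℚ equipped with a symmetric bilinear form (written x·y, with x² = x·x). For a triple γ = (r, c, d) with r a positive rational, c ∈ V, and d ∈ ℚ, define the discriminant Δ(γ) = (1/r)(c²/2 − d − ((r−1)/(2r)) c²). Let γ_i = (r_i, c_i, d_i), i = 1, …, ℓ, with each r_i > 0, and let γ = (r, c, d) where r = ∑ r_i, c = ∑ c_i, d = ∑ d_i. Then r·Δ(γ) = ∑_{i=1}^{ℓ} r_i Δ(γ_i) − ∑_{i=2}^{ℓ} (1 / (2 r_i (∑_{j=1}^{i} r_j)(∑_{k=1}^{i−1} r_k))) · (∑_{j=1}^{i−1} (r_i c_j − r_j c_i))², where for a vector v ∈ V, v² denotes v·v. -/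
open Finset

/-- The discriminant `Δ(γ)` of a triple `γ = (r, c, d)` with respect to a bilinear
form `B`, namely `Δ = (1/r)(B c c / 2 − d − ((r−1)/(2r)) B c c)`. -/
noncomputable def discriminant {V : Type*} [AddCommGroup V] [Module ℚ V]
    (B : V → V → ℚ) (r : ℚ) (c : V) (d : ℚ) : ℚ :=
  (1 / r) * (B c c / 2 - d - ((r - 1) / (2 * r)) * B c c)

lemma mul_discriminant {V : Type*} [AddCommGroup V] [Module ℚ V]
    (B : V → V → ℚ) (r : ℚ) (hr : r ≠ 0) (c : V) (d : ℚ) :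
    r * discriminant B r c d = B c c / (2 * r) - d := by
  unfold discriminant
  field_simp
  ring

lemma key_identity {V : Type*} [AddCommGroup V] [Module ℚ V]
    (B : V →ₗ[ℚ] V →ₗ[ℚ] ℚ) (hsymm : ∀ x y, B x y = B y x) (r : ℕ → ℚ) (c : ℕ → V)
    (ℓ : ℕ) (hℓ : 1 ≤ ℓ) (hr : ∀ i ∈ Finset.Icc 1 ℓ, 0 < r i) :
    B (∑ i ∈ Finset.Icc 1 ℓ, c i) (∑ i ∈ Finset.Icc 1 ℓ, c i)
        / (2 * ∑ i ∈ Finset.Icc 1 ℓ, r i)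
      = ∑ i ∈ Finset.Icc 1 ℓ, B (c i) (c i) / (2 * r i)
        - ∑ i ∈ Finset.Icc 2 ℓ,
            (1 / (2 * r i * (∑ j ∈ Finset.Icc 1 i, r j) * (∑ k ∈ Finset.Icc 1 (i - 1), r k)))
              * (B (∑ j ∈ Finset.Icc 1 (i - 1), (r i • c j - r j • c i))
                   (∑ j ∈ Finset.Icc 1 (i - 1), (r i • c j - r j • c i))) := by
  induction ℓ, hℓ using Nat.le_induction with
  | base => simp
  | succ ℓ hℓ ih =>
    have hr' : ∀ i ∈ Finset.Icc 1 ℓ, 0 < r i := by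
      intro i hi
      apply hr
      simp only [Finset.mem_Icc] at hi ⊢
      omega
    set S := ∑ i ∈ Finset.Icc 1 ℓ, r i with hSdef
    set P := ∑ i ∈ Finset.Icc 1 ℓ, c i with hPdef
    have hS : 0 < S := Finset.sum_pos hr' ⟨1, by simp [hℓ]⟩
    have hρ : 0 < r (ℓ+1) := hr _ (by simp)
    have h1 : ∑ i ∈ Finset.Icc 1 (ℓ+1), c i = P + c (ℓ+1) :=
      Finset.sum_Icc_succ_top (by omega) c
    have h2 : ∑ i ∈ Finset.Icc 1 (ℓ+1), r i = S + r (ℓ+1) :=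
      Finset.sum_Icc_succ_top (by omega) r
    have h3 : ∑ i ∈ Finset.Icc 1 (ℓ+1), B (c i) (c i) / (2 * r i)
        = (∑ i ∈ Finset.Icc 1 ℓ, B (c i) (c i) / (2 * r i))
          + B (c (ℓ+1)) (c (ℓ+1)) / (2 * r (ℓ+1)) :=
      Finset.sum_Icc_succ_top (by omega) _
    have h4 : ∑ i ∈ Finset.Icc 2 (ℓ+1),
            (1 / (2 * r i * (∑ j ∈ Finset.Icc 1 i, r j) * (∑ k ∈ Finset.Icc 1 (i - 1), r k)))
              * (B (∑ j ∈ Finset.Icc 1 (i - 1), (r i • c j - r j • c i))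
                   (∑ j ∈ Finset.Icc 1 (i - 1), (r i • c j - r j • c i)))
        = (∑ i ∈ Finset.Icc 2 ℓ,
            (1 / (2 * r i * (∑ j ∈ Finset.Icc 1 i, r j) * (∑ k ∈ Finset.Icc 1 (i - 1), r k)))
              * (B (∑ j ∈ Finset.Icc 1 (i - 1), (r i • c j - r j • c i))
                   (∑ j ∈ Finset.Icc 1 (i - 1), (r i • c j - r j • c i))))
          + (1 / (2 * r (ℓ+1) * (∑ j ∈ Finset.Icc 1 (ℓ+1), r j) * (∑ k ∈ Finset.Icc 1 ℓ, r k)))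
              * (B (∑ j ∈ Finset.Icc 1 ℓ, (r (ℓ+1) • c j - r j • c (ℓ+1)))
                   (∑ j ∈ Finset.Icc 1 ℓ, (r (ℓ+1) • c j - r j • c (ℓ+1)))) := by
      rw [Finset.sum_Icc_succ_top (show 2 ≤ ℓ + 1 by omega)]
      simp only [Nat.add_sub_cancel]
    have hv : ∑ j ∈ Finset.Icc 1 ℓ, (r (ℓ+1) • c j - r j • c (ℓ+1))
        = r (ℓ+1) • P - S • c (ℓ+1) := by
      rw [Finset.sum_sub_distrib, ← Finset.smul_sum, ← Finset.sum_smul]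
    rw [h1, h3, h4, hv, h2]
    have hBv : B (r (ℓ+1) • P - S • c (ℓ+1)) (r (ℓ+1) • P - S • c (ℓ+1))
        = r (ℓ+1) * r (ℓ+1) * B P P - 2 * (r (ℓ+1) * S) * B P (c (ℓ+1))
          + S * S * B (c (ℓ+1)) (c (ℓ+1)) := by
      simp only [map_sub, map_smul, LinearMap.sub_apply, LinearMap.smul_apply, smul_eq_mul,
        hsymm (c (ℓ+1)) P]
      ring
    have hBP : B (P + c (ℓ+1)) (P + c (ℓ+1))
        = B P P + 2 * B P (c (ℓ+1)) + B (c (ℓ+1)) (c (ℓ+1)) := by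
      simp only [map_add, LinearMap.add_apply, hsymm (c (ℓ+1)) P]
      ring
    rw [hBv, hBP, ← hSdef]
    rw [show (∑ i ∈ Finset.Icc 1 ℓ, B (c i) (c i) / (2 * r i))
        = B P P / (2 * S) + ∑ i ∈ Finset.Icc 2 ℓ,
            (1 / (2 * r i * (∑ j ∈ Finset.Icc 1 i, r j) * (∑ k ∈ Finset.Icc 1 (i - 1), r k)))
              * (B (∑ j ∈ Finset.Icc 1 (i - 1), (r i • c j - r j • c i))
                   (∑ j ∈ Finset.Icc 1 (i - 1), (r i • c j - r j • c i)))
      from by rw [ih hr']; ring]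
    rw [show ∀ (X T Y Z : ℚ), X + T + Y - (T + Z) = X + Y - Z from fun _ _ _ _ => by ring]
    have h5 : S + r (ℓ+1) ≠ 0 := by positivity
    field_simp
    ring

theorem discriminant_filtration_identity {V : Type*} [AddCommGroup V] [Module ℚ V]
    (B : V →ₗ[ℚ] V →ₗ[ℚ] ℚ) (hsymm : ∀ x y, B x y = B y x)
    (ℓ : ℕ) (hℓ : 1 ≤ ℓ) (r : ℕ → ℚ) (hr : ∀ i ∈ Finset.Icc 1 ℓ, 0 < r i)
    (c : ℕ → V) (d : ℕ → ℚ)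
    (R : ℚ) (hR : R = ∑ i ∈ Finset.Icc 1 ℓ, r i)
    (C : V) (hC : C = ∑ i ∈ Finset.Icc 1 ℓ, c i)
    (D : ℚ) (hD : D = ∑ i ∈ Finset.Icc 1 ℓ, d i) :
    R * discriminant (fun x y => B x y) R C D
      = ∑ i ∈ Finset.Icc 1 ℓ, r i * discriminant (fun x y => B x y) (r i) (c i) (d i)
        - ∑ i ∈ Finset.Icc 2 ℓ,
            (1 / (2 * r i * (∑ j ∈ Finset.Icc 1 i, r j) * (∑ k ∈ Finset.Icc 1 (i - 1), r k)))
              * (B (∑ j ∈ Finset.Icc 1 (i - 1), (r i • c j - r j • c i))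
                   (∑ j ∈ Finset.Icc 1 (i - 1), (r i • c j - r j • c i))) := by
  have hR0 : 0 < R := hR ▸ Finset.sum_pos hr ⟨1, by simp [hℓ]⟩
  rw [mul_discriminant _ R hR0.ne' C D]
  have hsum : ∑ i ∈ Finset.Icc 1 ℓ, r i * discriminant (fun x y => B x y) (r i) (c i) (d i)
      = ∑ i ∈ Finset.Icc 1 ℓ, (B (c i) (c i) / (2 * r i) - d i) := by
    refine Finset.sum_congr rfl fun i hi => ?_
    exact mul_discriminant _ (r i) (hr i hi).ne' (c i) (d i)
  rw [hsum, Finset.sum_sub_distrib, ← hD, hC, hR,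
    key_identity B hsymm r c ℓ hℓ hr]
  ring
end

section
/- Define sgn : ℝ → ℝ by sgn(x) = 1 for x > 0, sgn(0) = 0, sgn(x) = −1 for x < 0. Let ℓ ≥ 1 and let φ_1, …, φ_ℓ and ψ_1, …, ψ_{ℓ−1} be real numbers, where ψ_i plays the role of φ'(∑_{j≤i} γ_j) − φ'(∑_{j>i} γ_j). Define S = (−1)^k if for every i = 1, …, ℓ−1 either (a) φ_i ≤ φ_{i+1} and ψ_i > 0, or (b) φ_i > φ_{i+1} and ψ_i ≤ 0, where k is the number of indices i satisfying (a); and S = 0 if some index satisfies neither (a) nor (b). Assume 0 < v and, for all i = 1, …, ℓ−1, v < |φ_i − φ_{i+1}| whenever φ_i ≠ φ_{i+1}, and v < |ψ_i| whenever ψ_i ≠ 0 (ψ_i may be 0). Then S = 2^{−(ℓ−1)} ∏_{i=1}^{ℓ−1} ( sgn(φ_i − φ_{i+1} − v) − sgn(ψ_i − v) ). -/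
open Finset
open scoped Classical

theorem wallcrossing_sign_product (ℓ : ℕ) (hℓ : 1 ≤ ℓ) (φ ψ : ℕ → ℝ) (v : ℝ)
    (hv : 0 < v)
    (hφ : ∀ i ∈ Finset.Icc 1 (ℓ - 1), φ i ≠ φ (i + 1) → v < |φ i - φ (i + 1)|)
    (hψ : ∀ i ∈ Finset.Icc 1 (ℓ - 1), ψ i ≠ 0 → v < |ψ i|)
    (S : ℝ)
    (hS : S = if ∀ i ∈ Finset.Icc 1 (ℓ - 1),
          (φ i ≤ φ (i + 1) ∧ 0 < ψ i) ∨ (φ (i + 1) < φ i ∧ ψ i ≤ 0)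
        then (-1 : ℝ) ^
          ((Finset.Icc 1 (ℓ - 1)).filter (fun i => φ i ≤ φ (i + 1) ∧ 0 < ψ i)).card
        else 0) :
    S = (2 : ℝ) ^ (-((ℓ : ℤ) - 1)) *
        ∏ i ∈ Finset.Icc 1 (ℓ - 1),
          (Real.sign (φ i - φ (i + 1) - v) - Real.sign (ψ i - v)) := by
  set T := Finset.Icc 1 (ℓ - 1) with hT
  have hsgnφ : ∀ i ∈ T, Real.sign (φ i - φ (i + 1) - v) =
      if φ i ≤ φ (i + 1) then -1 else 1 := by
    intro i hi
    by_cases h : φ i ≤ φ (i + 1)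
    · rw [if_pos h, Real.sign_of_neg]; linarith
    · push_neg at h
      rw [if_neg (not_le.mpr h), Real.sign_of_pos]
      have := hφ i hi (ne_of_gt h)
      rw [abs_of_pos (by linarith)] at this
      linarith
  have hsgnψ : ∀ i ∈ T, Real.sign (ψ i - v) =
      if 0 < ψ i then 1 else -1 := by
    intro i hi
    by_cases h : 0 < ψ i
    · rw [if_pos h, Real.sign_of_pos]
      have := hψ i hi (ne_of_gt h)
      rw [abs_of_pos h] at this
      linarith
    · push_neg at h
      rw [if_neg (not_lt.mpr h), Real.sign_of_neg]; linarith
  have hfac : ∀ i ∈ T, (Real.sign (φ i - φ (i + 1) - v) - Real.sign (ψ i - v)) =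
      if (φ i ≤ φ (i + 1) ∧ 0 < ψ i) then (-2 : ℝ)
      else if (φ (i + 1) < φ i ∧ ψ i ≤ 0) then 2 else 0 := by
    intro i hi
    rw [hsgnφ i hi, hsgnψ i hi]
    by_cases h1 : φ i ≤ φ (i + 1) <;> by_cases h2 : 0 < ψ i
    · rw [if_pos h1, if_pos h2, if_pos ⟨h1, h2⟩]; norm_num
    · rw [if_pos h1, if_neg h2, if_neg (fun h => h2 h.2),
        if_neg (fun h => absurd h1 (not_le.mpr h.1))]; norm_num
    · rw [if_neg h1, if_pos h2, if_neg (fun h => h1 h.1),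
        if_neg (fun h => absurd h2 (not_lt.mpr h.2))]; norm_num
    · rw [if_neg h1, if_neg h2, if_neg (fun h => h1 h.1),
        if_pos ⟨not_le.mp h1, not_lt.mp h2⟩]; norm_num
  rw [Finset.prod_congr rfl hfac]
  have hcard : T.card = ℓ - 1 := by simp [hT]
  by_cases hall : ∀ i ∈ T, (φ i ≤ φ (i + 1) ∧ 0 < ψ i) ∨ (φ (i + 1) < φ i ∧ ψ i ≤ 0)
  · rw [hS, if_pos hall]
    have : ∀ i ∈ T, (if (φ i ≤ φ (i + 1) ∧ 0 < ψ i) then (-2 : ℝ)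
        else if (φ (i + 1) < φ i ∧ ψ i ≤ 0) then 2 else 0) =
        (if (φ i ≤ φ (i + 1) ∧ 0 < ψ i) then (-1 : ℝ) else 1) * 2 := by
      intro i hi
      by_cases h : (φ i ≤ φ (i + 1) ∧ 0 < ψ i)
      · rw [if_pos h, if_pos h]; norm_num
      · rcases hall i hi with h' | h'
        · exact absurd h' h
        · rw [if_neg h, if_neg h, if_pos h']; norm_num
    rw [Finset.prod_congr rfl this, Finset.prod_mul_distrib, Finset.prod_const,
      Finset.prod_ite, Finset.prod_const, Finset.prod_const, one_pow, mul_one, hcard]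
    have h2 : (2 : ℝ) ^ (-((ℓ : ℤ) - 1)) * (2 : ℝ) ^ (ℓ - 1) = 1 := by
      have : ((ℓ : ℤ) - 1) = ((ℓ - 1 : ℕ) : ℤ) := by omega
      rw [this, ← zpow_natCast (2 : ℝ) (ℓ - 1), ← zpow_add₀ (by norm_num : (2:ℝ) ≠ 0)]
      simp
    rw [mul_left_comm, h2, mul_one]
  · rw [hS, if_neg hall]
    push_neg at hall
    obtain ⟨i, hi, hni⟩ := hall
    rw [Finset.prod_eq_zero hi, mul_zero]
    rw [if_neg (fun h => absurd (hni.1 h.1) (not_le.mpr h.2)),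
      if_neg (fun h => absurd (hni.2 h.1) (not_lt.mpr h.2))]
end

section
/- Let ℓ ≥ 2 and r_1, …, r_ℓ be positive integers, b_1, …, b_ℓ rational numbers, and set S_i = ∑_{j=1}^{i} r_j. Then ∑_{i=2}^{ℓ} (r_i / (2 S_i S_{i−1})) (∑_{j=1}^{i−1} r_j (b_j − b_i))² = (1/(2 S_ℓ)) ∑_{1 ≤ i < j ≤ ℓ} r_i r_j (b_i − b_j)². -/
open Finset

private lemma lagrange_aux (n : ℕ) (w c : ℕ → ℚ) :
    (∑ i ∈ Finset.Icc 1 n, w i) * (∑ i ∈ Finset.Icc 1 n, w i * (c i) ^ 2)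
      - (∑ i ∈ Finset.Icc 1 n, w i * c i) ^ 2
    = ∑ i ∈ Finset.Icc 1 n, ∑ j ∈ Finset.Icc (i + 1) n, w i * w j * (c i - c j) ^ 2 := by
  induction n with
  | zero => simp
  | succ n ih =>
    have h1 : (1 : ℕ) ≤ n + 1 := by omega
    rw [Finset.sum_Icc_succ_top h1, Finset.sum_Icc_succ_top h1, Finset.sum_Icc_succ_top h1,
      Finset.sum_Icc_succ_top h1]
    rw [show Finset.Icc (n + 1 + 1) (n + 1) = ∅ from Finset.Icc_eq_empty (by omega),
      Finset.sum_empty, add_zero]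
    have hsplit : ∑ i ∈ Finset.Icc 1 n, ∑ j ∈ Finset.Icc (i + 1) (n + 1),
        w i * w j * (c i - c j) ^ 2
        = (∑ i ∈ Finset.Icc 1 n, ∑ j ∈ Finset.Icc (i + 1) n, w i * w j * (c i - c j) ^ 2)
          + ∑ i ∈ Finset.Icc 1 n, w i * w (n + 1) * (c i - c (n + 1)) ^ 2 := by
      rw [← Finset.sum_add_distrib]
      refine Finset.sum_congr rfl fun i hi => ?_
      rw [Finset.sum_Icc_succ_top (by simp at hi; omega)]
    rw [hsplit, ← ih]
    have hD : ∑ i ∈ Finset.Icc 1 n, w i * w (n + 1) * (c i - c (n + 1)) ^ 2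
        = w (n + 1) * (∑ i ∈ Finset.Icc 1 n, w i * (c i) ^ 2)
          - 2 * w (n + 1) * c (n + 1) * (∑ i ∈ Finset.Icc 1 n, w i * c i)
          + w (n + 1) * c (n + 1) ^ 2 * (∑ i ∈ Finset.Icc 1 n, w i) := by
      rw [Finset.mul_sum, Finset.mul_sum, Finset.mul_sum, ← Finset.sum_sub_distrib,
        ← Finset.sum_add_distrib]
      exact Finset.sum_congr rfl fun i _ => by ring
    rw [hD]
    ring

theorem telescoping_quadratic_identity (ℓ : ℕ) (hℓ : 2 ≤ ℓ) (r : ℕ → ℤ)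
    (hr : ∀ i ∈ Finset.Icc 1 ℓ, 0 < r i) (b : ℕ → ℚ)
    (S : ℕ → ℤ) (hS : ∀ i, S i = ∑ j ∈ Finset.Icc 1 i, r j) :
    ∑ i ∈ Finset.Icc 2 ℓ,
        ((r i : ℚ) / (2 * (S i : ℚ) * (S (i - 1) : ℚ))) *
          (∑ j ∈ Finset.Icc 1 (i - 1), (r j : ℚ) * (b j - b i)) ^ 2
      = (1 / (2 * (S ℓ : ℚ))) * ∑ i ∈ Finset.Icc 1 ℓ, ∑ j ∈ Finset.Icc (i + 1) ℓ,
          (r i : ℚ) * (r j : ℚ) * (b i - b j) ^ 2 := by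
  have hSpos : ∀ m, 1 ≤ m → (∀ i ∈ Finset.Icc 1 m, 0 < r i) → 0 < S m := by
    intro m hm hrm
    rw [hS]
    exact Finset.sum_pos hrm ⟨1, by simp [hm]⟩
  induction ℓ, hℓ using Nat.le_induction with
  | base =>
    have h1 : 0 < r 1 := hr 1 (by decide)
    have h2 : 0 < r 2 := hr 2 (by decide)
    have hS1 : (S 1 : ℚ) = (r 1 : ℚ) := by rw [hS]; norm_num
    have hS2 : (S 2 : ℚ) = (r 1 : ℚ) + (r 2 : ℚ) := by
      rw [hS]
      rw [show Finset.Icc 1 2 = {1, 2} from rfl]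
      push_cast [Finset.sum_insert, Finset.sum_singleton]
      norm_num
    rw [show Finset.Icc 2 2 = {2} from rfl, show Finset.Icc 1 2 = {1, 2} from rfl]
    simp only [Finset.sum_insert, Finset.sum_singleton, Finset.mem_singleton]
    norm_num
    rw [hS1, hS2]
    have hr1 : (r 1 : ℚ) ≠ 0 := by positivity
    have hr2 : (r 2 : ℚ) ≠ 0 := by positivity
    have hr12 : (r 1 : ℚ) + (r 2 : ℚ) ≠ 0 := by positivity
    field_simp
  | succ n hn ih =>
    have hrn : ∀ i ∈ Finset.Icc 1 n, 0 < r i := fun i hi =>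
      hr i (Finset.Icc_subset_Icc_right (by omega) hi)
    have ih' := ih hrn
    have hSn : 0 < S n := hSpos n (by omega) hrn
    have hSn1 : 0 < S (n + 1) := hSpos (n + 1) (by omega) hr
    have hSnQ : ((S n : ℤ) : ℚ) ≠ 0 := by exact_mod_cast hSn.ne'
    have hSn1Q : ((S (n + 1) : ℤ) : ℚ) ≠ 0 := by exact_mod_cast hSn1.ne'
    have hSS : ((S (n + 1) : ℤ) : ℚ) = (S n : ℚ) + (r (n + 1) : ℚ) := by
      rw [hS (n + 1), Finset.sum_Icc_succ_top (by omega : (1:ℕ) ≤ n + 1), hS n]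
      push_cast
      ring
    rw [Finset.sum_Icc_succ_top (by omega : (2:ℕ) ≤ n + 1),
      Finset.sum_Icc_succ_top (by omega : (1:ℕ) ≤ n + 1)]
    simp only [Nat.add_sub_cancel]
    rw [show Finset.Icc (n + 1 + 1) (n + 1) = ∅ from Finset.Icc_eq_empty (by omega),
      Finset.sum_empty, add_zero]
    have hsplit : ∑ i ∈ Finset.Icc 1 n, ∑ j ∈ Finset.Icc (i + 1) (n + 1),
        (r i : ℚ) * (r j : ℚ) * (b i - b j) ^ 2
        = (∑ i ∈ Finset.Icc 1 n, ∑ j ∈ Finset.Icc (i + 1) n,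
            (r i : ℚ) * (r j : ℚ) * (b i - b j) ^ 2)
          + ∑ i ∈ Finset.Icc 1 n, (r i : ℚ) * (r (n + 1) : ℚ) * (b i - b (n + 1)) ^ 2 := by
      rw [← Finset.sum_add_distrib]
      refine Finset.sum_congr rfl fun i hi => ?_
      rw [Finset.sum_Icc_succ_top (by simp at hi; omega)]
    rw [hsplit, ih']
    have hq := lagrange_aux n (fun i => (r i : ℚ)) (fun i => b i - b (n + 1))
    simp only [sub_sub_sub_cancel_right] at hq
    have hW : (∑ i ∈ Finset.Icc 1 n, (r i : ℚ)) = (S n : ℚ) := by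
      rw [hS n]; push_cast; rfl
    rw [hW] at hq
    have hD : ∑ i ∈ Finset.Icc 1 n, (r i : ℚ) * (r (n + 1) : ℚ) * (b i - b (n + 1)) ^ 2
        = (r (n + 1) : ℚ) * ∑ i ∈ Finset.Icc 1 n, (r i : ℚ) * (b i - b (n + 1)) ^ 2 := by
      rw [Finset.mul_sum]
      exact Finset.sum_congr rfl fun i _ => by ring
    rw [hD, ← hq, hSS]
    have hrQ : (0:ℚ) < (r (n + 1) : ℚ) := by
      exact_mod_cast hr (n + 1) (by simp)
    rw [hSS] at hSn1Q
    field_simp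
    ring
end
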